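/- For y ∈ [2.26, 2.51], define vor(S_y) = −8·δ_oct·y²/((12−y²)^(1/2)·(16−y²)) + (8/3)·arctan((12−y²)^(1/2)·y²/(64−6y²)). Then vor(S_y) is decreasing in y on the interval [2.26, 2.41]. -/

import Mathlib

/-!
The derivative of `vorS` is `16 y / (√(12 - y²) (16 - y²))` times
`1 - δ_oct (1 + y² / (2 (12 - y²)) + y² / (16 - y²))`. On the interval the first factor is
positive, and since `y² ≥ 2.26² > 5.1` the bracket exceeds `1.839`, while `δ_oct > 0.55`;
so the derivative is negative.
-/

noncomputable section
open Real

/-- δ_oct = (−3π + 12 arccos(1/√3))/(2√2) ≈ 0.720903. -/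
def deltaOct : ℝ := (-3*π + 12*Real.arccos (1/Real.sqrt 3)) / (2*Real.sqrt 2)

/-- The explicit formula (9.17.4) for vor(S_y), where S_y = S(2,2,2,y,y,y). -/
def vorS (y : ℝ) : ℝ :=
  -8*deltaOct*y^2 / (Real.sqrt (12 - y^2) * (16 - y^2)) +
    (8/3) * Real.arctan (Real.sqrt (12 - y^2) * y^2 / (64 - 6*y^2))

lemma arccos_inv_sqrt_three_gt : (0.917 : ℝ) < arccos (1 / √3) := by
  have hsqrt3 : (1.73205 : ℝ) < √3 := (lt_sqrt (by norm_num)).2 (by norm_num)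
  have hlt : 1 / √3 < cos 0.917 := by
    have : 1 / √3 < (0.57736 : ℝ) := by
      rw [div_lt_iff₀ (by positivity)]; linarith
    linarith [one_sub_sq_div_two_le_cos (x := 0.917)]
  have h := arccos_lt_arccos (by linarith [show 0 ≤ 1 / √3 by positivity]) hlt (cos_le_one _)
  rwa [arccos_cos (by norm_num) (by linarith [pi_gt_three])] at h

lemma deltaOct_gt : (0.55 : ℝ) < deltaOct := by
  have hsqrt2 : √2 < (1.41422 : ℝ) := (sqrt_lt' (by norm_num)).2 (by norm_num)
  rw [deltaOct, lt_div_iff₀ (by positivity)]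
  linarith [pi_lt_d6, arccos_inv_sqrt_three_gt]

lemma one_lt_deltaOct_mul {t : ℝ} (ht : 5.1076 ≤ t) (ht' : t < 12) :
    1 < deltaOct * (1 + t / (2 * (12 - t)) + t / (16 - t)) := by
  have h12 : (0.3705 : ℝ) ≤ t / (2 * (12 - t)) := by
    rw [le_div_iff₀ (by linarith)]; linarith
  have h16 : (0.4689 : ℝ) ≤ t / (16 - t) := by
    rw [le_div_iff₀ (by linarith)]; linarith
  nlinarith [deltaOct_gt]

section Derivatives

variable {y : ℝ}

lemma hasDerivAt_sqrt_twelve_sub_sq (hy : y ^ 2 < 12) :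
    HasDerivAt (fun x : ℝ => √(12 - x ^ 2)) (-y / √(12 - y ^ 2)) y := by
  have h := ((hasDerivAt_pow 2 y).const_sub 12).sqrt (by linarith)
  convert h using 1
  field_simp
  ring

lemma hasDerivAt_volume_term (c : ℝ) (hy : y ^ 2 < 12) :
    HasDerivAt (fun x : ℝ => c * x ^ 2 / (√(12 - x ^ 2) * (16 - x ^ 2)))
      (2 * c * y / (√(12 - y ^ 2) * (16 - y ^ 2)) *
        (1 + y ^ 2 / (2 * (12 - y ^ 2)) + y ^ 2 / (16 - y ^ 2))) y := by
  have hs : 0 < √(12 - y ^ 2) := sqrt_pos.2 (by linarith)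
  have hs2 : √(12 - y ^ 2) ^ 2 = 12 - y ^ 2 := sq_sqrt (by linarith)
  have h16 : 16 - y ^ 2 ≠ 0 := by linarith
  have h := ((hasDerivAt_pow 2 y).const_mul c).div
    ((hasDerivAt_sqrt_twelve_sub_sq hy).mul ((hasDerivAt_pow 2 y).const_sub 16))
    (mul_ne_zero hs.ne' h16)
  refine h.congr_deriv ?_
  have h12 : 12 - y ^ 2 ≠ 0 := by linarith
  simp only [Pi.mul_apply]
  field_simp
  rw [hs2]
  ring

lemma hasDerivAt_solid_angle_term (hy : y ^ 2 < 32 / 3) :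
    HasDerivAt (fun x : ℝ => 8 / 3 * arctan (√(12 - x ^ 2) * x ^ 2 / (64 - 6 * x ^ 2)))
      (16 * y / (√(12 - y ^ 2) * (16 - y ^ 2))) y := by
  have hs : 0 < √(12 - y ^ 2) := sqrt_pos.2 (by linarith)
  have hs2 : √(12 - y ^ 2) ^ 2 = 12 - y ^ 2 := sq_sqrt (by linarith)
  have h16 : 16 - y ^ 2 ≠ 0 := by linarith
  have h64 : 64 - 6 * y ^ 2 ≠ 0 := by linarith
  have h64' : 64 - y ^ 2 * 6 ≠ 0 := by linarith
  have h := ((((hasDerivAt_sqrt_twelve_sub_sq (by linarith)).mul (hasDerivAt_pow 2 y)).div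
    (((hasDerivAt_pow 2 y).const_mul 6).const_sub 64) h64).arctan).const_mul (8 / 3)
  have hw : 1 + (√(12 - y ^ 2) * y ^ 2 / (64 - 6 * y ^ 2)) ^ 2
      = (16 - y ^ 2) ^ 3 / (64 - 6 * y ^ 2) ^ 2 := by
    rw [div_pow, mul_pow, hs2]
    field_simp
    ring
  refine h.congr_deriv ?_
  simp only [Pi.mul_apply, Pi.div_apply]
  rw [hw]
  field_simp
  rw [hs2]
  ring

lemma hasDerivAt_vorS (hy : y ^ 2 < 32 / 3) :
    HasDerivAt vorS
      (16 * y / (√(12 - y ^ 2) * (16 - y ^ 2)) *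
        (1 - deltaOct * (1 + y ^ 2 / (2 * (12 - y ^ 2)) + y ^ 2 / (16 - y ^ 2)))) y := by
  refine ((hasDerivAt_volume_term (-8 * deltaOct) (by linarith)).add
    (hasDerivAt_solid_angle_term hy)).congr_deriv ?_
  ring

end Derivatives

/-- vor(S_y) is decreasing in y on [2.26, 2.41]. -/
theorem vorS_strictAntiOn : StrictAntiOn vorS (Set.Icc (2.26:ℝ) 2.41) := by
  have hsq : ∀ y ∈ Set.Icc (2.26 : ℝ) 2.41, 5.1076 ≤ y ^ 2 ∧ y ^ 2 < 32 / 3 := fun y hy =>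
    ⟨by nlinarith [hy.1], by nlinarith [hy.1, hy.2]⟩
  refine strictAntiOn_of_hasDerivWithinAt_neg (convex_Icc _ _)
    (fun y hy => (hasDerivAt_vorS (hsq y hy).2).continuousAt.continuousWithinAt)
    (fun y hy => (hasDerivAt_vorS (hsq y (interior_subset hy)).2).hasDerivWithinAt)
    (fun y hy => ?_)
  have hy' : y ∈ Set.Icc (2.26 : ℝ) 2.41 := interior_subset hy
  obtain ⟨hlo, hhi⟩ := hsq y hy'
  have hpos : 0 < 16 * y / (√(12 - y ^ 2) * (16 - y ^ 2)) := by
    have : 0 < y := by linarith [hy'.1]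
    have : 0 < √(12 - y ^ 2) := sqrt_pos.2 (by linarith)
    have : 0 < 16 - y ^ 2 := by linarith
    positivity
  exact mul_neg_of_pos_of_neg hpos (sub_neg.2 (one_lt_deltaOct_mul hlo (by linarith)))
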